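/- arXiv:1907.11052 — 4 statements merged into one kernel-verified Lean document; each statement's English description precedes it below -/
import Mathlib

section
/- Let f : ℝ → ℝ be a differentiable function with 0 < f(x) for all x, such that f(x) → 0 as x → ∞, and suppose there exist constants A > 0 and X ∈ ℝ such that f'(x) ≤ -f(x) + A·f(x)^2 for all x ≥ X. Then limsup_{x→∞} e^x·f(x) < ∞; in fact there exists a constant B > 0 and a point X' such that f(x) ≤ (1/B)·e^{-x} for all x ≥ X'. -/
open Filter

/-- If `f` is positive, differentiable, tends to `0` at infinity, and eventually satisfies the
differential inequality `f' ≤ -f + A f²` for some `A > 0`, then `f` decays at least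
exponentially: `limsup eˣ f(x) < ∞`, and indeed `f(x) ≤ (1/B) e^{-x}` eventually for some
`B > 0`. -/
theorem exponential_decay_from_diff_ineq
    (f : ℝ → ℝ) (hf : Differentiable ℝ f)
    (hpos : ∀ x, 0 < f x)
    (hlim : Tendsto f atTop (nhds 0))
    (A X : ℝ) (hA : 0 < A)
    (hineq : ∀ x ≥ X, deriv f x ≤ -f x + A * f x ^ 2) :
    IsBoundedUnder (· ≤ ·) atTop (fun x => Real.exp x * f x) ∧
      ∃ B > (0 : ℝ), ∃ X' : ℝ, ∀ x ≥ X', f x ≤ (1 / B) * Real.exp (-x) := by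
  set g : ℝ → ℝ := fun x => Real.exp (-x) * ((f x)⁻¹ - A) with hg
  -- derivative of g
  have hgderiv : ∀ x, HasDerivAt g
      (-Real.exp (-x) * ((f x)⁻¹ - A) + Real.exp (-x) * (-(deriv f x) / f x ^ 2)) x := by
    intro x
    have h1 : HasDerivAt (fun x : ℝ => Real.exp (-x)) (-Real.exp (-x)) x := by
      have := (Real.hasDerivAt_exp (-x)).comp x (hasDerivAt_neg x)
      simp only [mul_neg, mul_one] at this
      exact this
    have h2 : HasDerivAt (fun x => (f x)⁻¹ - A) (-(deriv f x) / f x ^ 2) x := by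
      have := ((hf x).hasDerivAt.inv (hpos x).ne')
      simpa [div_eq_mul_inv] using this.sub_const A
    exact h1.mul h2
  -- deriv g is nonneg on x ≥ X
  have hgmono : MonotoneOn g (Set.Ici X) := by
    apply monotoneOn_of_deriv_nonneg (convex_Ici X)
    · exact fun x _ => ((hgderiv x).continuousAt).continuousWithinAt
    · exact fun x _ => (hgderiv x).differentiableAt.differentiableWithinAt
    · intro x hx
      rw [interior_Ici] at hx
      rw [(hgderiv x).deriv]
      have hfx := hpos x
      have hkey : deriv f x ≤ -f x + A * f x ^ 2 := hineq x hx.le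
      have hfx2 : (0:ℝ) < f x ^ 2 := by positivity
      have hE : (0:ℝ) < Real.exp (-x) := Real.exp_pos _
      have : (f x)⁻¹ - A ≤ -(deriv f x) / f x ^ 2 := by
        rw [le_div_iff₀ hfx2]
        have : (f x)⁻¹ * f x ^ 2 = f x := by
          field_simp
        nlinarith [hkey]
      nlinarith [this]
  -- pick X' with f X' small
  have hsmall : ∀ᶠ x in atTop, f x < (2 * A)⁻¹ := by
    have := hlim.eventually (eventually_lt_nhds (by positivity : (0:ℝ) < (2*A)⁻¹))
    simpa using this
  obtain ⟨x0, hx0⟩ := hsmall.exists_forall_of_atTop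
  set X' := max X x0 with hX'
  have hfX' : f X' < (2*A)⁻¹ := hx0 X' (le_max_right _ _)
  have hu : A < (f X')⁻¹ := by
    have h1 : (2*A : ℝ) < (f X')⁻¹ := by
      rw [← inv_inv (2*A)]
      exact inv_strictAnti₀ (hpos X') hfX'
    linarith
  set c := g X' with hc
  have hcpos : 0 < c := by
    have : 0 < (f X')⁻¹ - A := by linarith
    exact mul_pos (Real.exp_pos _) this
  have hbound : ∀ x ≥ X', f x ≤ (1 / c) * Real.exp (-x) := by
    intro x hx
    have hXx : X ≤ x := le_trans (le_max_left _ _) hx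
    have hXX' : X ≤ X' := le_max_left _ _
    have hmon : c ≤ g x := hgmono hXX' hXx hx
    have hE : (0:ℝ) < Real.exp (-x) := Real.exp_pos _
    have hEx : Real.exp (-x) = (Real.exp x)⁻¹ := by
      rw [Real.exp_neg]
    -- g x = exp(-x) * ((f x)⁻¹ - A) ≥ c ⇒ (f x)⁻¹ ≥ c * exp x
    have h1 : c * Real.exp x ≤ (f x)⁻¹ - A := by
      have := hmon
      rw [hg] at this
      simp only at this
      have hEpos : (0:ℝ) < Real.exp x := Real.exp_pos _
      rw [hEx] at this
      rw [← mul_le_mul_iff_of_pos_right hEpos] at this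
      calc c * Real.exp x ≤ (Real.exp x)⁻¹ * ((f x)⁻¹ - A) * Real.exp x := by
              linarith
        _ = (f x)⁻¹ - A := by field_simp
    have h2 : c * Real.exp x ≤ (f x)⁻¹ := by linarith
    have hcex : (0:ℝ) < c * Real.exp x := by positivity
    calc f x = ((f x)⁻¹)⁻¹ := by rw [inv_inv]
      _ ≤ (c * Real.exp x)⁻¹ := by
          exact inv_anti₀ hcex h2
      _ = (1 / c) * Real.exp (-x) := by
          rw [hEx, mul_inv, one_div]
  refine ⟨⟨1 / c, ?_⟩, c, hcpos, X', hbound⟩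
  rw [eventually_map]
  filter_upwards [eventually_ge_atTop X'] with x hx
  have := hbound x hx
  have hEpos : (0:ℝ) < Real.exp x := Real.exp_pos _
  calc Real.exp x * f x ≤ Real.exp x * ((1 / c) * Real.exp (-x)) := by
        exact mul_le_mul_of_nonneg_left this hEpos.le
    _ = 1 / c := by
        rw [Real.exp_neg]; field_simp
end

section
/- Fix integers n ≥ 1, m ≥ 1 and a real α > 0, and set c = (n+m-1)·C(n+m-2, n-1), where C(a,b) denotes the binomial coefficient. Let T̄, W̄ : [0,∞) → ℝ be continuous functions taking values in [0,1] such that T̄ is differentiable with T̄'(t) = W̄(t) - T̄(t) for all t > 0, and such that for every t ≥ 0 the function z ↦ α·e^{-α z}·( W̄(z) + (T̄(z) - W̄(z))·c·Σ_{i=0}^{n-1} C(n-1,i)·(-1)^i·(1/(m+i))·T̄(z)^{m+i} ) is Lebesgue integrable on [t,∞) and W̄(t) = e^{α t}·∫_t^∞ α·e^{-α z}·( W̄(z) + (T̄(z) - W̄(z))·c·Σ_{i=0}^{n-1} C(n-1,i)·(-1)^i·(1/(m+i))·T̄(z)^{m+i} ) dz. Then W̄ is differentiable on (0,∞) and W̄'(t)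 = α·c·T̄'(t)·Σ_{i=0}^{n-1} C(n-1,i)·(-1)^i·(1/(m+i))·T̄(t)^{m+i} for all t > 0. -/
/-! Since `∫_t^∞ f = ∫_a^∞ f - ∫_a^t f`, the fundamental theorem of calculus gives
`d/dt ∫_t^∞ f = -f t` at points of continuity. The product rule applied to
`W t = e^{αt} ∫_t^∞ α e^{-αz} g z dz` then yields `W' = α (W - g)`, and for the integrand of the
theorem `W - g = (W - T) c Σ… = T' c Σ…`. -/

open Filter MeasureTheory Set Topology

theorem hasDerivAt_setIntegral_Ici {E : Type*} [NormedAddCommGroup E] [NormedSpace ℝ E]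
    [CompleteSpace E] {f : ℝ → E} {a s : ℝ} (hf : IntegrableOn f (Ioi a)) (has : a < s)
    (hfs : ContinuousAt f s) :
    HasDerivAt (fun t => ∫ z in Ici t, f z) (-f s) s := by
  have hmeas : StronglyMeasurableAtFilter f (𝓝 s) :=
    ⟨Ioi a, Ioi_mem_nhds has, hf.aestronglyMeasurable⟩
  have hinterval : HasDerivAt (fun t => ∫ z in a..t, f z) (f s) s :=
    intervalIntegral.integral_hasDerivAt_right
      ((intervalIntegrable_iff_integrableOn_Ioc_of_le has.le).2
        (hf.mono_set Ioc_subset_Ioi_self)) hmeas hfs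
  refine (hinterval.const_sub (∫ z in Ioi a, f z)).congr_of_eventuallyEq ?_
  filter_upwards [Ioi_mem_nhds has] with t hat
  rw [integral_Ici_eq_integral_Ioi, ← intervalIntegral.integral_Ioi_sub_Ioi hf hat.le,
    sub_sub_cancel]

theorem hasDerivAt_of_eventuallyEq_exp_mul_integral_Ici {W g : ℝ → ℝ} {α a s : ℝ}
    (hint : IntegrableOn (fun z => α * Real.exp (-(α * z)) * g z) (Ioi a)) (has : a < s)
    (hgs : ContinuousAt g s)
    (hW : W =ᶠ[𝓝 s] fun t => Real.exp (α * t) * ∫ z in Ici t, α * Real.exp (-(α * z)) * g z) :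
    HasDerivAt W (α * (W s - g s)) s := by
  have hexp : HasDerivAt (fun t => Real.exp (α * t)) (Real.exp (α * s) * α) s := by
    simpa using ((hasDerivAt_id s).const_mul α).exp
  have hcont : ContinuousAt (fun z => α * Real.exp (-(α * z)) * g z) s := by fun_prop
  have hprod := (hexp.mul (hasDerivAt_setIntegral_Ici hint has hcont)).congr_of_eventuallyEq hW
  refine hprod.congr_deriv ?_
  rw [hW.eq_of_nhds]
  have hinv : Real.exp (α * s) * Real.exp (-(α * s)) = 1 := by
    rw [← Real.exp_add, add_neg_cancel, Real.exp_zero]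
  linear_combination -α * g s * hinv

theorem workload_ode_from_integral_equation_general
    (n m : ℕ) (α : ℝ) (c : ℝ) (T W : ℝ → ℝ)
    (hWc : ContinuousOn W (Set.Ici 0))
    (hT' : ∀ t > (0:ℝ), HasDerivAt T (W t - T t) t)
    (hint : ∀ t ≥ (0:ℝ), IntegrableOn
      (fun z => α * Real.exp (-(α * z)) * (W z + (T z - W z) * c *
        ∑ i ∈ Finset.range n,
          ((n - 1).choose i : ℝ) * (-1) ^ i * (1 / ((m : ℝ) + i)) * T z ^ (m + i)))
      (Set.Ici t))
    (heq : ∀ t ≥ (0:ℝ), W t = Real.exp (α * t) * ∫ z in Set.Ici t,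
      α * Real.exp (-(α * z)) * (W z + (T z - W z) * c *
        ∑ i ∈ Finset.range n,
          ((n - 1).choose i : ℝ) * (-1) ^ i * (1 / ((m : ℝ) + i)) * T z ^ (m + i))) :
    ∀ t > (0:ℝ), HasDerivAt W
      (α * c * deriv T t *
        ∑ i ∈ Finset.range n,
          ((n - 1).choose i : ℝ) * (-1) ^ i * (1 / ((m : ℝ) + i)) * T t ^ (m + i)) t := by
  intro s hs
  have hTs : ContinuousAt T s := (hT' s hs).continuousAt
  have hWs : ContinuousAt W s := hWc.continuousAt (Ici_mem_nhds hs)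
  have hWd := hasDerivAt_of_eventuallyEq_exp_mul_integral_Ici
    ((hint 0 le_rfl).mono_set Ioi_subset_Ici_self) hs (by fun_prop)
    ((eventually_gt_nhds hs).mono fun t ht => heq t ht.le)
  refine hWd.congr_deriv ?_
  rw [(hT' s hs).deriv]
  ring

/-- Differentiating the renewal-type integral equation for the complementary workload
distribution `W̄`: if `T̄' = W̄ - T̄` on `(0,∞)` and `W̄` satisfies the integral equation obtained
by conditioning on the previous batch arrival, then `W̄` is differentiable on `(0,∞)` with
`W̄'(t) = α c T̄'(t) Σᵢ C(n-1,i) (-1)ⁱ (1/(m+i)) T̄(t)^{m+i}`. -/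
theorem workload_ode_from_integral_equation
    (n m : ℕ) (hn : 1 ≤ n) (hm : 1 ≤ m) (α : ℝ) (hα : 0 < α)
    (c : ℝ) (hc : c = ((n + m - 1 : ℕ) : ℝ) * ((n + m - 2).choose (n - 1) : ℝ))
    (T W : ℝ → ℝ)
    (hTc : ContinuousOn T (Set.Ici 0)) (hWc : ContinuousOn W (Set.Ici 0))
    (hT01 : ∀ t ≥ (0:ℝ), T t ∈ Set.Icc (0:ℝ) 1)
    (hW01 : ∀ t ≥ (0:ℝ), W t ∈ Set.Icc (0:ℝ) 1)
    (hT' : ∀ t > (0:ℝ), HasDerivAt T (W t - T t) t)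
    (hint : ∀ t ≥ (0:ℝ), IntegrableOn
      (fun z => α * Real.exp (-(α * z)) * (W z + (T z - W z) * c *
        ∑ i ∈ Finset.range n,
          ((n - 1).choose i : ℝ) * (-1) ^ i * (1 / ((m : ℝ) + i)) * T z ^ (m + i)))
      (Set.Ici t))
    (heq : ∀ t ≥ (0:ℝ), W t = Real.exp (α * t) * ∫ z in Set.Ici t,
      α * Real.exp (-(α * z)) * (W z + (T z - W z) * c *
        ∑ i ∈ Finset.range n,
          ((n - 1).choose i : ℝ) * (-1) ^ i * (1 / ((m : ℝ) + i)) * T z ^ (m + i))) :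
    ∀ t > (0:ℝ), HasDerivAt W
      (α * c * deriv T t *
        ∑ i ∈ Finset.range n,
          ((n - 1).choose i : ℝ) * (-1) ^ i * (1 / ((m : ℝ) + i)) * T t ^ (m + i)) t :=
  workload_ode_from_integral_equation_general n m α c T W hWc hT' hint heq
end

section
/- Fix integers n ≥ 1, m ≥ 1 and a real α > 0, and set c = (n+m-1)·C(n+m-2, n-1). Let T̄, W̄ : [0,∞) → ℝ be continuous functions taking values in [0,1] with T̄(t) → 0 and W̄(t) → 0 as t → ∞, such that T̄ and W̄ are differentiable on (0,∞) with T̄'(t) = W̄(t) - T̄(t) and W̄'(t) = α·c·T̄'(t)·Σ_{i=0}^{n-1} C(n-1,i)·(-1)^i·(1/(m+i))·T̄(t)^{m+i} for all t > 0. Then W̄(t) = α·c·Σ_{i=0}^{n-1} C(n-1,i)·(-1)^i·(1/((m+i)(m+i+1)))·T̄(t)^{m+i+1} for all t > 0, and consequently T̄ satisfies the differential equation T̄'(t) = -T̄(t) + α·c·Σ_{i=0}^{n-1} C(n-1,i)·(-1)^i·(1/((m+i)(m+i+1)))·T̄(t)^{m+i+1}. -/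
/-!
With `P` the termwise antiderivative of the series in `W̄'`, the chain rule shows that
`W̄ - α c P(T̄)` has zero derivative on `(0, ∞)`; it tends to `0` at infinity because `T̄` and `W̄`
do and `P(0) = 0`, so it vanishes identically. Substituting into `T̄' = W̄ - T̄` gives the ODE.
-/

open Filter Topology

theorem eq_of_hasDerivAt_zero_of_tendsto_atTop {E : Type*} [NormedAddCommGroup E]
    [NormedSpace ℝ E] {f : ℝ → E} {a : ℝ} {L : E} (hf : ∀ t > a, HasDerivAt f 0 t)
    (hlim : Tendsto f atTop (𝓝 L)) {t : ℝ} (ht : a < t) : f t = L := by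
  have hconst : ∀ s > a, f s = f t :=
    fun s hs => isOpen_Ioi.is_const_of_deriv_eq_zero isPreconnected_Ioi
      (fun x hx => (hf x hx).differentiableAt.differentiableWithinAt)
      (fun x hx => (hf x hx).deriv) hs ht
  refine tendsto_nhds_unique (tendsto_const_nhds (x := f t)) (hlim.congr' ?_)
  filter_upwards [eventually_gt_atTop a] with s hs using hconst s hs

/-- For `k = 0` both sides are `0`, since `1 / 0 = 0`. -/
theorem hasDerivAt_one_div_mul_pow_succ (k : ℕ) (x : ℝ) :
    HasDerivAt (fun x : ℝ => 1 / ((k : ℝ) * (k + 1)) * x ^ (k + 1)) (1 / (k : ℝ) * x ^ k) x := by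
  refine ((hasDerivAt_pow (k + 1) x).const_mul _).congr_deriv ?_
  push_cast
  field_simp

theorem hasDerivAt_sum_one_div_mul_pow_succ (s : Finset ℕ) (a : ℕ → ℝ) (m : ℕ) (x : ℝ) :
    HasDerivAt
      (fun x : ℝ => ∑ i ∈ s, a i * (1 / (((m : ℝ) + i) * ((m : ℝ) + i + 1))) * x ^ (m + i + 1))
      (∑ i ∈ s, a i * (1 / ((m : ℝ) + i)) * x ^ (m + i)) x := by
  refine HasDerivAt.fun_sum fun i _ => ?_
  have h := (hasDerivAt_one_div_mul_pow_succ (m + i) x).const_mul (a i)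
  simp only [Nat.cast_add, ← mul_assoc] at h
  exact h

theorem workload_integration_step_general
    (n m : ℕ) (α : ℝ)
    (c : ℝ)
    (T W : ℝ → ℝ)
    (hTlim : Tendsto T atTop (nhds 0)) (hWlim : Tendsto W atTop (nhds 0))
    (hT' : ∀ t > (0:ℝ), HasDerivAt T (W t - T t) t)
    (hW' : ∀ t > (0:ℝ), HasDerivAt W
      (α * c * (W t - T t) *
        ∑ i ∈ Finset.range n,
          ((n - 1).choose i : ℝ) * (-1) ^ i * (1 / ((m : ℝ) + i)) * T t ^ (m + i)) t) :
    (∀ t > (0:ℝ), W t = α * c *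
        ∑ i ∈ Finset.range n,
          ((n - 1).choose i : ℝ) * (-1) ^ i *
            (1 / (((m : ℝ) + i) * ((m : ℝ) + i + 1))) * T t ^ (m + i + 1)) ∧
      ∀ t > (0:ℝ), HasDerivAt T
        (-T t + α * c *
          ∑ i ∈ Finset.range n,
            ((n - 1).choose i : ℝ) * (-1) ^ i *
              (1 / (((m : ℝ) + i) * ((m : ℝ) + i + 1))) * T t ^ (m + i + 1)) t := by
  set P : ℝ → ℝ := fun x => ∑ i ∈ Finset.range n,
    ((n - 1).choose i : ℝ) * (-1) ^ i * (1 / (((m : ℝ) + i) * ((m : ℝ) + i + 1))) * x ^ (m + i + 1)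
  have hP : ∀ x, HasDerivAt P (∑ i ∈ Finset.range n,
      ((n - 1).choose i : ℝ) * (-1) ^ i * (1 / ((m : ℝ) + i)) * x ^ (m + i)) x :=
    hasDerivAt_sum_one_div_mul_pow_succ (Finset.range n) (fun i => (n - 1).choose i * (-1) ^ i) m
  have hPT : Tendsto (fun t => P (T t)) atTop (𝓝 0) := by
    have hP0 : P 0 = 0 := by simp [P]
    have hPcont : Continuous P := continuous_iff_continuousAt.2 fun x => (hP x).continuousAt
    exact hP0 ▸ (hPcont.tendsto 0).comp hTlim
  have hW : ∀ t > (0:ℝ), W t = α * c * P (T t) := by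
    intro t ht
    refine sub_eq_zero.1 <| eq_of_hasDerivAt_zero_of_tendsto_atTop (a := 0)
      (f := fun t => W t - α * c * P (T t)) (fun t ht => ?_) ?_ ht
    · exact ((hW' t ht).sub (((hP (T t)).comp t (hT' t ht)).const_mul (α * c))).congr_deriv
        (by ring)
    · simpa using hWlim.sub (hPT.const_mul (α * c))
  refine ⟨hW, fun t ht => ?_⟩
  convert hT' t ht using 1
  rw [hW t ht]
  ring

/-- Integration step: from the coupled relations `T̄' = W̄ - T̄` and
`W̄' = α c T̄' Σᵢ C(n-1,i) (-1)ⁱ (1/(m+i)) T̄^{m+i}` on `(0,∞)`, with both tails vanishing at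
infinity, one gets `W̄ = α c Σᵢ C(n-1,i) (-1)ⁱ (1/((m+i)(m+i+1))) T̄^{m+i+1}` and hence the
closed autonomous ODE for `T̄`. -/
theorem workload_integration_step
    (n m : ℕ) (hn : 1 ≤ n) (hm : 1 ≤ m) (α : ℝ) (hα : 0 < α)
    (c : ℝ) (hc : c = ((n + m - 1 : ℕ) : ℝ) * ((n + m - 2).choose (n - 1) : ℝ))
    (T W : ℝ → ℝ)
    (hTc : ContinuousOn T (Set.Ici 0)) (hWc : ContinuousOn W (Set.Ici 0))
    (hT01 : ∀ t ≥ (0:ℝ), T t ∈ Set.Icc (0:ℝ) 1)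
    (hW01 : ∀ t ≥ (0:ℝ), W t ∈ Set.Icc (0:ℝ) 1)
    (hTlim : Tendsto T atTop (nhds 0)) (hWlim : Tendsto W atTop (nhds 0))
    (hT' : ∀ t > (0:ℝ), HasDerivAt T (W t - T t) t)
    (hW' : ∀ t > (0:ℝ), HasDerivAt W
      (α * c * (W t - T t) *
        ∑ i ∈ Finset.range n,
          ((n - 1).choose i : ℝ) * (-1) ^ i * (1 / ((m : ℝ) + i)) * T t ^ (m + i)) t) :
    (∀ t > (0:ℝ), W t = α * c *
        ∑ i ∈ Finset.range n,
          ((n - 1).choose i : ℝ) * (-1) ^ i *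
            (1 / (((m : ℝ) + i) * ((m : ℝ) + i + 1))) * T t ^ (m + i + 1)) ∧
      ∀ t > (0:ℝ), HasDerivAt T
        (-T t + α * c *
          ∑ i ∈ Finset.range n,
            ((n - 1).choose i : ℝ) * (-1) ^ i *
              (1 / (((m : ℝ) + i) * ((m : ℝ) + i + 1))) * T t ^ (m + i + 1)) t :=
  workload_integration_step_general n m α c T W hTlim hWlim hT' hW'
end

section
/- Fix integers n ≥ 1 and m ≥ d ≥ 1. Then lim_{p→0+} [ Σ_{j=0}^{n-1} C(n+m,j)·(1-p)^j·p^{n+m-j} ] / [ 1 - (1 - p^d)^n ] = 0, where C(a,b) denotes the binomial coefficient. -/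
open Filter Finset

/-! Every term of the binomial tail carries a factor `p ^ (n + m - j)` with `j < n`, so the tail is
at most a constant times `p ^ (m + 1)`. On the other hand `1 - (1 - p ^ d) ^ n ≥ p ^ d`, the
probability that a single replicated task is late. Hence the ratio is `O(p ^ (m + 1 - d))`, which
tends to `0` because `m ≥ d`. -/

lemma binomial_lower_tail_le (n m : ℕ) {p : ℝ} (hp₀ : 0 ≤ p) (hp₁ : p ≤ 1) :
    ∑ j ∈ range n, ((n + m).choose j : ℝ) * (1 - p) ^ j * p ^ (n + m - j) ≤
      (∑ j ∈ range n, ((n + m).choose j : ℝ)) * p ^ (m + 1) := by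
  rw [sum_mul]
  refine sum_le_sum fun j hj => ?_
  have hjn : j < n := mem_range.mp hj
  have hq : (1 - p) ^ j ≤ 1 := pow_le_one₀ (by linarith) (by linarith)
  have hpow : p ^ (n + m - j) ≤ p ^ (m + 1) := pow_le_pow_of_le_one hp₀ hp₁ (by omega)
  calc ((n + m).choose j : ℝ) * (1 - p) ^ j * p ^ (n + m - j)
      ≤ ((n + m).choose j : ℝ) * 1 * p ^ (m + 1) := by gcongr
    _ = ((n + m).choose j : ℝ) * p ^ (m + 1) := by rw [mul_one]

lemma le_one_sub_one_sub_pow {R : Type*} [Ring R] [LinearOrder R] [IsStrictOrderedRing R]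
    {x : R} (hx₀ : 0 ≤ x) (hx₁ : x ≤ 1) {n : ℕ} (hn : n ≠ 0) :
    x ≤ 1 - (1 - x) ^ n :=
  le_sub_comm.mpr (pow_le_of_le_one (sub_nonneg.mpr hx₁) (sub_le_self 1 hx₀) hn)

lemma binomial_lower_tail_div_le {n m d : ℕ} (hn : n ≠ 0) (hd : d ≤ m + 1) {p : ℝ}
    (hp : p ∈ Set.Ioo 0 1) :
    (∑ j ∈ range n, ((n + m).choose j : ℝ) * (1 - p) ^ j * p ^ (n + m - j)) /
        (1 - (1 - p ^ d) ^ n) ≤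
      (∑ j ∈ range n, ((n + m).choose j : ℝ)) * p ^ (m + 1 - d) := by
  obtain ⟨hp₀, hp₁⟩ := hp
  have hpd : 0 < p ^ d := pow_pos hp₀ d
  have hden : p ^ d ≤ 1 - (1 - p ^ d) ^ n :=
    le_one_sub_one_sub_pow hpd.le (pow_le_one₀ hp₀.le hp₁.le) hn
  calc (∑ j ∈ range n, ((n + m).choose j : ℝ) * (1 - p) ^ j * p ^ (n + m - j)) /
        (1 - (1 - p ^ d) ^ n)
      ≤ (∑ j ∈ range n, ((n + m).choose j : ℝ)) * p ^ (m + 1) / p ^ d :=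
        div_le_div₀ (by positivity) (binomial_lower_tail_le n m hp₀.le hp₁.le) hpd hden
    _ = (∑ j ∈ range n, ((n + m).choose j : ℝ)) * p ^ (m + 1 - d) := by
        rw [mul_div_assoc, pow_sub₀ p hp₀.ne' hd, div_eq_mul_inv]

lemma binomial_lower_tail_div_nonneg {n m d : ℕ} (hn : n ≠ 0) {p : ℝ} (hp : p ∈ Set.Ioo 0 1) :
    0 ≤ (∑ j ∈ range n, ((n + m).choose j : ℝ) * (1 - p) ^ j * p ^ (n + m - j)) /
        (1 - (1 - p ^ d) ^ n) := by
  obtain ⟨hp₀, hp₁⟩ := hp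
  have hden : p ^ d ≤ 1 - (1 - p ^ d) ^ n :=
    le_one_sub_one_sub_pow (pow_nonneg hp₀.le d) (pow_le_one₀ hp₀.le hp₁.le) hn
  have hq : 0 ≤ 1 - p := sub_nonneg.mpr hp₁.le
  have hnum : ∀ j ∈ range n, 0 ≤ ((n + m).choose j : ℝ) * (1 - p) ^ j * p ^ (n + m - j) :=
    fun j _ => by positivity
  exact div_nonneg (sum_nonneg hnum) ((pow_nonneg hp₀.le d).trans hden)

theorem mds_tail_negligible_vs_replication_general
    (n m d : ℕ) (hn : 1 ≤ n) (hmd : d ≤ m) :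
    Tendsto (fun p : ℝ =>
        (∑ j ∈ Finset.range n, ((n + m).choose j : ℝ) * (1 - p) ^ j * p ^ (n + m - j)) /
          (1 - (1 - p ^ d) ^ n))
      (nhdsWithin 0 (Set.Ioi 0)) (nhds 0) := by
  set C : ℝ := ∑ j ∈ range n, ((n + m).choose j : ℝ)
  have hn₀ : n ≠ 0 := Nat.one_le_iff_ne_zero.mp hn
  have hunit : Set.Ioo (0 : ℝ) 1 ∈ nhdsWithin (0 : ℝ) (Set.Ioi 0) :=
    Ioo_mem_nhdsGT zero_lt_one
  have hbound : Tendsto (fun p : ℝ => C * p ^ (m + 1 - d)) (nhdsWithin 0 (Set.Ioi 0)) (nhds 0) := by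
    have h := ((continuous_pow (m + 1 - d)).tendsto (0 : ℝ)).const_mul C
    rw [zero_pow (by omega), mul_zero] at h
    exact h.mono_left nhdsWithin_le_nhds
  refine squeeze_zero' ?_ ?_ hbound
  · filter_upwards [hunit] with p hp using binomial_lower_tail_div_nonneg hn₀ hp
  · filter_upwards [hunit] with p hp using binomial_lower_tail_div_le hn₀ (by omega) hp

/-- For `m ≥ d`, the MDS batch tail (a binomial tail decaying like `p^{m+1}`) is negligible
compared to the replication-d batch tail `1 - (1 - p^d)^n` as `p → 0⁺`. -/
theorem mds_tail_negligible_vs_replication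
    (n m d : ℕ) (hn : 1 ≤ n) (hd : 1 ≤ d) (hmd : d ≤ m) :
    Tendsto (fun p : ℝ =>
        (∑ j ∈ Finset.range n, ((n + m).choose j : ℝ) * (1 - p) ^ j * p ^ (n + m - j)) /
          (1 - (1 - p ^ d) ^ n))
      (nhdsWithin 0 (Set.Ioi 0)) (nhds 0) :=
  mds_tail_negligible_vs_replication_general n m d hn hmd
end
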